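/- arXiv:1208.2978 — 3 statements merged into one kernel-verified Lean document; each statement's English description precedes it below -/
import Mathlib

section
/- For all real numbers p and q, S p * S q = S (p + q) as 3×3 matrices over Λ. (Closure under multiplication of the one-parameter family S, i.e. part (i) of the lemma that the matrices S(2pη) form an abelian group.) -/
noncomputable section

abbrev Λ : Type := ExteriorAlgebra ℂ (Fin 2 → ℂ)

def η : Λ := ExteriorAlgebra.ι ℂ (Pi.single 0 1)

def η' : Λ := ExteriorAlgebra.ι ℂ (Pi.single 1 1)

def E : Λ := η * η'

def S (p : ℝ) : Matrix (Fin 3) (Fin 3) Λ :=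
  !![1 + ((p ^ 2 / 2 : ℝ) : ℂ) • E, 0, -((p : ℂ) • η');
     0, 1 + ((p ^ 2 / 2 : ℝ) : ℂ) • E, -((p : ℂ) • η);
     (p : ℂ) • η, -((p : ℂ) • η'), 1 - ((p ^ 2 : ℝ) : ℂ) • E]

lemma hηη : η * η = 0 := ExteriorAlgebra.ι_sq_zero _
lemma hη'η' : η' * η' = 0 := ExteriorAlgebra.ι_sq_zero _
lemma hswap : η' * η = -E := by
  have h := ExteriorAlgebra.ι_add_mul_swap (R := ℂ) (Pi.single 1 1 : Fin 2 → ℂ) (Pi.single 0 1)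
  rw [E]; exact eq_neg_of_add_eq_zero_left h
lemma hηE : η * E = 0 := by rw [E, ← mul_assoc, hηη, zero_mul]
lemma hEη' : E * η' = 0 := by rw [E, mul_assoc, hη'η', mul_zero]
lemma hEη : E * η = 0 := by rw [E, mul_assoc, hswap, mul_neg, hηE, neg_zero]
lemma hη'E : η' * E = 0 := by rw [E, ← mul_assoc, hswap, neg_mul, hEη', neg_zero]
lemma hEE : E * E = 0 := by
  rw [E, mul_assoc η η', ← mul_assoc η' η, hswap, neg_mul, hEη', neg_zero, mul_zero]
lemma hηη' : η * η' = E := rfl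

theorem S_mul (p q : ℝ) : S p * S q = S (p + q) := by
  simp only [S]
  rw [Matrix.mul_fin_three]
  congr 1
  apply Matrix.vec3_eq <;> apply Matrix.vec3_eq <;>
    simp only [mul_add, add_mul, sub_mul, mul_sub, mul_neg, neg_mul, mul_smul_comm,
      smul_mul_assoc, smul_smul, mul_one, one_mul, mul_zero, zero_mul, neg_zero, add_zero,
      zero_add, smul_zero, neg_neg, smul_neg, sub_zero, zero_sub,
      hηη, hη'η', hswap, hηη', hEE, hEη, hηE, hEη', hη'E]
  all_goals push_cast
  all_goals module
end
end

section
/- Let α, β ∈ ℂ with |α|² + |β|² = 1 and p ∈ ℝ. Set θ := α•η - β•η' and θ' := (conj α)•η' + (conj β)•η, and let S̃ p be the matrix with rows (1 + (p²/2)•E, 0, -p•θ'), (0, 1 + (p²/2)•E, -p•θ), (p•θ, -p•θ', 1 - p²•E). Then U α β * S̃ p = S p * U α β. (The SU(2) rotation and the odd translation 'essentially commute': conjugating S by U replaces the odd generator η by the rotated odd element θ.) -/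
noncomputable section

def U (α β : ℂ) : Matrix (Fin 3) (Fin 3) Λ :=
  !![algebraMap ℂ Λ α, -(algebraMap ℂ Λ (starRingEnd ℂ β)), 0;
     algebraMap ℂ Λ β, algebraMap ℂ Λ (starRingEnd ℂ α), 0;
     0, 0, 1]

/-- The rotated odd element `θ = α•η - β•η'`. -/
def θ (α β : ℂ) : Λ := α • η - β • η'

/-- The rotated conjugate odd element `θ' = conj α • η' + conj β • η`. -/
def θ' (α β : ℂ) : Λ := (starRingEnd ℂ α) • η' + (starRingEnd ℂ β) • η

/-- The matrix `S̃ p`, i.e. `S p` with `η` replaced by the rotated odd element `θ`. -/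
def St (p : ℝ) (α β : ℂ) : Matrix (Fin 3) (Fin 3) Λ :=
  !![1 + ((p ^ 2 / 2 : ℝ) : ℂ) • E, 0, -((p : ℂ) • θ' α β);
     0, 1 + ((p ^ 2 / 2 : ℝ) : ℂ) • E, -((p : ℂ) • θ α β);
     (p : ℂ) • θ α β, -((p : ℂ) • θ' α β), 1 - ((p ^ 2 : ℝ) : ℂ) • E]

theorem U_S_essentially_commute (α β : ℂ)
    (h : Complex.normSq α + Complex.normSq β = 1) (p : ℝ) :
    U α β * St p α β = S p * U α β := by
  have hc : α * starRingEnd ℂ α + β * starRingEnd ℂ β = 1 := by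
    rw [Complex.mul_conj, Complex.mul_conj, ← Complex.ofReal_add, h, Complex.ofReal_one]
  ext i j
  fin_cases i <;> fin_cases j <;>
    simp [Matrix.mul_apply, Fin.sum_univ_three, S, U, St, θ, θ', E,
      Algebra.algebraMap_eq_smul_one, mul_add, mul_sub, add_mul, sub_mul,
      mul_smul_comm, smul_mul_assoc, smul_smul, smul_sub, smul_add] <;>
    match_scalars <;>
    (try simp only [Complex.coe_algebraMap]) <;>
    first
      | ring1
      | linear_combination -hc
      | linear_combination -(p : ℂ) * hc
end
end

section
/- Let # be a grade involution on Λ_N. Then every homogeneous element x ∈ ⋀^k (for any k and any N) satisfies the reality condition x * (#x) = #(x * (#x)); that is, the product of any homogeneous supernumber with its grade involute is a real (involution-fixed) even supernumber. -/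
noncomputable section

/-- The rank-`N` complex Grassmann algebra. -/
abbrev Grass (N : ℕ) : Type := ExteriorAlgebra ℂ (Fin N → ℂ)

/-- A grade involution `#` on the Grassmann algebra `Λ_N`: a conjugate-linear,
order-preserving multiplicative map preserving each exterior power `⋀^k`, with
`#(#x) = (-1)^k • x` on `⋀^k`. -/
def IsGradeInvolution (N : ℕ) (f : Grass N → Grass N) : Prop :=
  (∀ x y : Grass N, f (x + y) = f x + f y) ∧
  (∀ (c : ℂ) (x : Grass N), f (c • x) = (starRingEnd ℂ c) • f x) ∧
  (∀ x y : Grass N, f (x * y) = f x * f y) ∧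
  (∀ (k : ℕ) (x : Grass N), x ∈ ⋀[ℂ]^k (Fin N → ℂ) → f x ∈ ⋀[ℂ]^k (Fin N → ℂ)) ∧
  (∀ (k : ℕ) (x : Grass N), x ∈ ⋀[ℂ]^k (Fin N → ℂ) → f (f x) = ((-1 : ℂ) ^ k) • x)

lemma grass_ι_comm (N q : ℕ) (m : Fin N → ℂ) (b : Grass N)
    (hb : b ∈ ⋀[ℂ]^q (Fin N → ℂ)) :
    ExteriorAlgebra.ι ℂ m * b = ((-1 : ℂ) ^ q) • (b * ExteriorAlgebra.ι ℂ m) := by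
  induction hb using Submodule.pow_induction_on_left' with
  | algebraMap r =>
    simp [Algebra.commutes]
  | add x y i hx hy ihx ihy =>
    simp only [mul_add, add_mul, ihx, ihy, smul_add]
  | mem_mul m' hm' i x hx ih =>
    obtain ⟨v, rfl⟩ := hm'
    have swap : ExteriorAlgebra.ι ℂ m * ExteriorAlgebra.ι ℂ v
        = -(ExteriorAlgebra.ι ℂ v * ExteriorAlgebra.ι ℂ m) :=
      eq_neg_of_add_eq_zero_left (ExteriorAlgebra.ι_add_mul_swap (R := ℂ) m v)
    calc ExteriorAlgebra.ι ℂ m * (ExteriorAlgebra.ι ℂ v * x)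
        = (ExteriorAlgebra.ι ℂ m * ExteriorAlgebra.ι ℂ v) * x := by rw [mul_assoc]
      _ = -(ExteriorAlgebra.ι ℂ v * (ExteriorAlgebra.ι ℂ m * x)) := by
          rw [swap, neg_mul, mul_assoc]
      _ = -(ExteriorAlgebra.ι ℂ v * (((-1 : ℂ) ^ i) • (x * ExteriorAlgebra.ι ℂ m))) := by
          rw [ih]
      _ = ((-1 : ℂ) ^ (i + 1)) • (ExteriorAlgebra.ι ℂ v * x * ExteriorAlgebra.ι ℂ m) := by
          rw [mul_smul_comm, ← neg_smul, pow_succ, mul_comm ((-1:ℂ)^i), neg_one_mul,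
            mul_assoc]
      _ = ((-1 : ℂ) ^ Nat.succ i) • (ExteriorAlgebra.ι ℂ v * x * ExteriorAlgebra.ι ℂ m) := rfl

lemma grass_graded_comm (N p q : ℕ) (a b : Grass N)
    (ha : a ∈ ⋀[ℂ]^p (Fin N → ℂ)) (hb : b ∈ ⋀[ℂ]^q (Fin N → ℂ)) :
    a * b = ((-1 : ℂ) ^ (p * q)) • (b * a) := by
  induction ha using Submodule.pow_induction_on_left' with
  | algebraMap r =>
    simp [Algebra.commutes]
  | add x y i hx hy ihx ihy =>
    simp only [add_mul, mul_add, ihx, ihy, smul_add]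
  | mem_mul m hm i x hx ih =>
    obtain ⟨v, rfl⟩ := hm
    calc (ExteriorAlgebra.ι ℂ v * x) * b
        = ExteriorAlgebra.ι ℂ v * (x * b) := by rw [mul_assoc]
      _ = ExteriorAlgebra.ι ℂ v * (((-1 : ℂ) ^ (i * q)) • (b * x)) := by rw [ih]
      _ = ((-1 : ℂ) ^ (i * q)) • (ExteriorAlgebra.ι ℂ v * b * x) := by
          rw [mul_smul_comm, mul_assoc]
      _ = ((-1 : ℂ) ^ (i * q)) • ((((-1 : ℂ) ^ q) • (b * ExteriorAlgebra.ι ℂ v)) * x) := by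
          rw [grass_ι_comm N q v b hb]
      _ = ((-1 : ℂ) ^ (Nat.succ i * q)) • (b * (ExteriorAlgebra.ι ℂ v * x)) := by
          rw [smul_mul_assoc, smul_smul, ← pow_add, mul_assoc]
          congr 2
          rw [Nat.succ_mul, Nat.add_comm]

theorem homogeneous_reality_condition (N k : ℕ) (f : Grass N → Grass N)
    (hf : IsGradeInvolution N f) (x : Grass N) (hx : x ∈ ⋀[ℂ]^k (Fin N → ℂ)) :
    x * f x = f (x * f x) := by
  obtain ⟨hadd, hsmul, hmul, hmem, hinv⟩ := hf
  have hfx : f x ∈ ⋀[ℂ]^k (Fin N → ℂ) := hmem k x hx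
  have h1 : f (x * f x) = f x * f (f x) := hmul x (f x)
  have h2 : f (f x) = ((-1 : ℂ) ^ k) • x := hinv k x hx
  have h3 : f x * x = ((-1 : ℂ) ^ (k * k)) • (x * f x) :=
    grass_graded_comm N k k (f x) x hfx hx
  rw [h1, h2, mul_smul_comm, h3, smul_smul, ← pow_add]
  have : ((-1 : ℂ)) ^ (k + k * k) = 1 := by
    have hev : Even (k + k * k) := by
      have : k + k * k = k * (k + 1) := by ring
      rw [this]
      exact Nat.even_mul_succ_self k
    exact hev.neg_one_pow
  rw [this, one_smul]
end
end
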